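/- The supertrace Str : A₁ → k defined on the Weyl algebra by Str(f) = f(0) (the constant term in the symmetric/Weyl-ordered basis) vanishes on all κ-twisted commutators: Str(ab − b·κ(a)) = 0 for all a, b ∈ A₁, where κ is the automorphism sending q ↦ −q, p ↦ −p. -/

import Mathlib

/- STATEMENT 4: The supertrace Str on the Weyl algebra A₁ (the linear functional
with Str 1 = 1 vanishing on all Weyl-symmetrized monomials q^n p^m with
n+m > 0) vanishes on all κ-twisted commutators: Str (a*b − b*κ(a)) = 0, where
κ is the automorphism q ↦ −q, p ↦ −p.  Here the (unnormalized) symmetrized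
monomial is the sum of all words with n letters q and m letters p; this spans
the same line as the normalized symmetrization since char k = 0. -/
/-- The first Weyl algebra: the free algebra on generators `q` (encoded `true`)
and `p` (encoded `false`) modulo the relation `q*p = p*q + 1`. -/
inductive WeylRel (k : Type*) [CommRing k] :
    FreeAlgebra k Bool → FreeAlgebra k Bool → Prop
  | qp : WeylRel k (FreeAlgebra.ι k true * FreeAlgebra.ι k false)
      (FreeAlgebra.ι k false * FreeAlgebra.ι k true + 1)

/-- The first Weyl algebra `A₁` over `k`. -/
abbrev Weyl (k : Type*) [CommRing k] := RingQuot (WeylRel k)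

/-- the generator `q` of the Weyl algebra -/
noncomputable def Wq (k : Type*) [CommRing k] : Weyl k :=
  RingQuot.mkRingHom (WeylRel k) (FreeAlgebra.ι k true)

/-- the generator `p` of the Weyl algebra -/
noncomputable def Wp (k : Type*) [CommRing k] : Weyl k :=
  RingQuot.mkRingHom (WeylRel k) (FreeAlgebra.ι k false)

open scoped BigOperators

/-- the ordered word in `q`'s and `p`'s determined by `w` (`true` ↦ `q`). -/
noncomputable def weylWord (k : Type*) [CommRing k] {N : ℕ} (w : Fin N → Bool) : Weyl k :=
  (List.ofFn (fun i => if w i then Wq k else Wp k)).prod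

/-- the (unnormalized) Weyl-symmetrized monomial with `n` letters `q` and
`m` letters `p`: the sum over all orderings. -/
noncomputable def symMonomial (k : Type*) [CommRing k] (n m : ℕ) : Weyl k :=
  ∑ w : Fin (n + m) → Bool,
    if (Finset.univ.filter fun i => w i = true).card = n then weylWord k w else 0

/-
Let `x` be `q` or `p` and let `S` be the sum of all words with `n` letters `q` among `M`. Let
`T j` be the same sum with `x` inserted at position `j` of every word, so that `T 0 = x S` and
`T M = S x`. By `qp - pq = 1`, moving `x` one step to the right changes `T j` by a sum `D` of
shorter words that does not depend on `j`; hence `x S - S x = M D`, and pairing `T j` with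
`T (M - j)` gives `(M + 1) (x S + S x) = 2 ∑ j, T j`, a multiple of a symmetrized monomial of
degree `M + 1`. In characteristic zero these two identities show that the span of the symmetrized
monomials is a left ideal containing `1`, hence everything, and that `Str (x b + b x) = 0` for
all `b`. Since `κ x = -x`, this is the theorem for `a = x`, and the set of `a` for which it holds
is closed under sums and products:
`x y b - b κ(x y) = (x (y b) - y b κ x) + (y (b κ x) - b κ x κ y)`.
-/

theorem Fin.eq_add_nsmul_of_castSucc_eq_succ_add {G : Type*} [AddCommMonoid G] {N : ℕ}
    {T : Fin (N + 1) → G} {D : G} (h : ∀ j : Fin N, T j.castSucc = T j.succ + D)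
    (j : Fin (N + 1)) : T 0 = T j + (j : ℕ) • D := by
  induction j using Fin.induction with
  | zero => simp
  | succ j ih =>
    rw [ih, h, Fin.val_castSucc, Fin.val_succ, succ_nsmul, add_assoc, add_comm D]

theorem Fin.two_nsmul_sum_eq_of_castSucc_eq_succ_add {G : Type*} [AddCancelCommMonoid G] {N : ℕ}
    {T : Fin (N + 1) → G} {D : G} (h : ∀ j : Fin N, T j.castSucc = T j.succ + D) :
    2 • ∑ j, T j = (N + 1) • (T 0 + T (Fin.last N)) := by
  have key := Fin.eq_add_nsmul_of_castSucc_eq_succ_add h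
  have pair : ∀ j, T j + T j.rev = T 0 + T (Fin.last N) := by
    intro j
    apply add_right_cancel (b := N • D)
    have hN : N • D = (j : ℕ) • D + (j.rev : ℕ) • D := by
      rw [← add_nsmul, Fin.val_rev]; congr 1; omega
    calc T j + T j.rev + N • D = (T j + (j : ℕ) • D) + (T j.rev + (j.rev : ℕ) • D) := by
          rw [hN]; abel
      _ = T 0 + (T (Fin.last N) + N • D) := by
          rw [← key, ← key, key (Fin.last N), Fin.val_last]
      _ = T 0 + T (Fin.last N) + N • D := (add_assoc ..).symm
  rw [two_nsmul]
  nth_rw 2 [← Equiv.sum_comp Fin.revPerm]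
  simp only [← Finset.sum_add_distrib, Fin.revPerm_apply, pair, Finset.sum_const,
    Finset.card_univ, Fintype.card_fin]

def trueCount {M : ℕ} (w : Fin M → Bool) : ℕ := (Finset.univ.filter fun i => w i = true).card

theorem trueCount_le {M : ℕ} (w : Fin M → Bool) : trueCount w ≤ M :=
  (Finset.card_filter_le _ _).trans_eq (Finset.card_fin M)

theorem trueCount_insertNth {M : ℕ} (j : Fin (M + 1)) (a : Bool) (v : Fin M → Bool) :
    trueCount (Fin.insertNth j a v) = a.toNat + trueCount v := by
  rw [trueCount, trueCount, Finset.card_filter, Finset.card_filter, Fin.sum_univ_succAbove _ j]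
  cases a <;> simp

theorem card_filter_apply_eq {N : ℕ} (u : Fin N → Bool) (c : Bool) :
    (Finset.univ.filter fun j => u j = c).card = if c then trueCount u else N - trueCount u := by
  cases c
  · have h := Finset.card_filter_add_card_filter_not (s := Finset.univ) (fun j => u j = true)
    simp only [Bool.not_eq_true, Finset.card_univ, Fintype.card_fin] at h
    rw [if_neg Bool.false_ne_true, trueCount]
    omega
  · rfl

namespace Weyl

section CommRing

variable {k : Type*} [CommRing k]

noncomputable def gen (k : Type*) [CommRing k] (c : Bool) : Weyl k := if c then Wq k else Wp k

theorem Wq_mul_Wp : Wq k * Wp k = Wp k * Wq k + 1 := by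
  simpa [Wq, Wp] using RingQuot.mkRingHom_rel (WeylRel.qp (k := k))

theorem gen_mul_gen (c a : Bool) :
    gen k c * gen k a = gen k a * gen k c + ((c.toNat - a.toNat : ℤ) : Weyl k) := by
  cases c <;> cases a <;> simp [gen, Wq_mul_Wp]

theorem mkAlgHom_ι (c : Bool) :
    RingQuot.mkAlgHom k (WeylRel k) (FreeAlgebra.ι k c) = gen k c := by
  rw [← AlgHom.coe_toRingHom, RingQuot.mkAlgHom_coe]
  cases c <;> rfl

theorem induction_on {P : Weyl k → Prop} (algebraMap : ∀ r : k, P (algebraMap k (Weyl k) r))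
    (gen : ∀ c, P (gen k c)) (add : ∀ x y, P x → P y → P (x + y))
    (mul : ∀ x y, P x → P y → P (x * y)) (x : Weyl k) : P x := by
  obtain ⟨x, rfl⟩ := RingQuot.mkAlgHom_surjective k (WeylRel k) x
  induction x using FreeAlgebra.induction with
  | grade0 r => rw [AlgHom.commutes]; exact algebraMap r
  | grade1 c => rw [mkAlgHom_ι]; exact gen c
  | add x y hx hy => rw [map_add]; exact add _ _ hx hy
  | mul x y hx hy => rw [map_mul]; exact mul _ _ hx hy

theorem weylWord_cons {M : ℕ} (c : Bool) (w : Fin M → Bool) :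
    weylWord k (Fin.cons c w) = gen k c * weylWord k w := by
  simp [weylWord, gen, List.ofFn_succ]

theorem weylWord_snoc {M : ℕ} (c : Bool) (w : Fin M → Bool) :
    weylWord k (Fin.snoc w c) = weylWord k w * gen k c := by
  rw [weylWord, weylWord, List.ofFn_succ']
  simp [gen]

theorem weylWord_insertNth_castSucc {M : ℕ} (c : Bool) (j : Fin (M + 1))
    (w : Fin (M + 1) → Bool) :
    weylWord k (Fin.insertNth j.castSucc c w) = weylWord k (Fin.insertNth j.succ c w) +
      ((c.toNat : ℤ) - (w j).toNat) • weylWord k (Fin.removeNth j w) := by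
  have head : ∀ {M : ℕ} (w : Fin (M + 1) → Bool),
      weylWord k (Fin.insertNth (0 : Fin (M + 1)).castSucc c w) =
        weylWord k (Fin.insertNth (0 : Fin (M + 1)).succ c w) +
          ((c.toNat : ℤ) - (w 0).toNat) • weylWord k (Fin.removeNth 0 w) := by
    intro M w
    obtain ⟨a, v, rfl⟩ := Fin.exists_cons w
    rw [Fin.castSucc_zero, Fin.insertNth_zero', Fin.insertNth_succ_cons, Fin.insertNth_zero',
      Fin.cons_zero, Fin.removeNth_zero, Fin.tail_cons, weylWord_cons, weylWord_cons,
      weylWord_cons, weylWord_cons, ← mul_assoc, ← mul_assoc, gen_mul_gen, add_mul, mul_assoc,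
      zsmul_eq_mul]
  induction M with
  | zero =>
    obtain rfl := Fin.fin_one_eq_zero j
    exact head w
  | succ M ih =>
    cases j using Fin.cases with
    | zero => exact head w
    | succ j =>
      obtain ⟨a, v, rfl⟩ := Fin.exists_cons w
      have hremove : Fin.removeNth j.succ (Fin.cons a v : Fin (M + 2) → Bool) =
          Fin.cons a (Fin.removeNth j v) := Fin.cons_comp_succ_succAbove (β := Bool) a v j
      rw [← Fin.succ_castSucc, Fin.insertNth_succ_cons, Fin.insertNth_succ_cons, weylWord_cons,
        weylWord_cons, ih, Fin.cons_succ, hremove, weylWord_cons, mul_add, mul_smul_comm]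

noncomputable def wordSum (k : Type*) [CommRing k] (n M : ℕ) : Weyl k :=
  ∑ w : Fin M → Bool, if trueCount w = n then weylWord k w else 0

noncomputable def insertSum (k : Type*) [CommRing k] (c : Bool) (n M : ℕ) (j : Fin (M + 1)) :
    Weyl k :=
  ∑ v : Fin M → Bool, if trueCount v = n then weylWord k (Fin.insertNth j c v) else 0

theorem insertSum_zero (c : Bool) (n M : ℕ) : insertSum k c n M 0 = gen k c * wordSum k n M := by
  simp only [insertSum, wordSum, Finset.mul_sum, mul_ite, mul_zero, Fin.insertNth_zero',
    weylWord_cons]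

theorem insertSum_last (c : Bool) (n M : ℕ) :
    insertSum k c n M (Fin.last M) = wordSum k n M * gen k c := by
  simp only [insertSum, wordSum, Finset.sum_mul, ite_mul, zero_mul, Fin.insertNth_last',
    weylWord_snoc]

theorem insertSum_castSucc (c : Bool) (n M : ℕ) (j : Fin (M + 1)) :
    insertSum k c n (M + 1) j.castSucc = insertSum k c n (M + 1) j.succ +
      ((c.toNat : ℤ) - (!c).toNat) •
        ∑ v : Fin M → Bool, if (!c).toNat + trueCount v = n then weylWord k v else 0 := by
  simp only [insertSum, weylWord_insertNth_castSucc, ite_add_zero, Finset.sum_add_distrib]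
  congr 1
  -- write each word as `insertNth j a v`: the terms with `a = c` vanish
  rw [← (Fin.insertNthEquiv (fun _ => Bool) j).sum_comp, Fintype.sum_prod_type, Fintype.sum_bool]
  cases c <;> simp [Fin.insertNthEquiv, trueCount_insertNth, ← Finset.sum_neg_distrib, neg_ite]

theorem sum_insertSum (c : Bool) (n M : ℕ) :
    ∑ j, insertSum k c n M j =
      (if c then n + 1 else M + 1 - n) • wordSum k (n + c.toNat) (M + 1) := by
  have hj : ∀ j, insertSum k c n M j = ∑ u : Fin (M + 1) → Bool,
      if u j = c ∧ trueCount u = n + c.toNat then weylWord k u else 0 := by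
    intro j
    rw [← (Fin.insertNthEquiv (fun _ => Bool) j).sum_comp, Fintype.sum_prod_type,
      Fintype.sum_bool]
    cases c <;> simp [insertSum, Fin.insertNthEquiv, trueCount_insertNth, add_comm]
  rw [Finset.sum_congr rfl fun j _ => hj j, Finset.sum_comm, wordSum, Finset.smul_sum]
  refine Finset.sum_congr rfl fun u _ => ?_
  by_cases hu : trueCount u = n + c.toNat
  · simp only [hu, and_true, if_true]
    rw [← Finset.sum_filter, Finset.sum_const, card_filter_apply_eq, hu]
    cases c <;> simp
  · simp [hu]

theorem gen_mul_wordSum_add_wordSum_mul_gen (c : Bool) (n M : ℕ) :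
    (M + 1) • (gen k c * wordSum k n M + wordSum k n M * gen k c) =
      (2 * if c then n + 1 else M + 1 - n) • wordSum k (n + c.toNat) (M + 1) := by
  obtain ⟨D, hD⟩ : ∃ D, ∀ j : Fin M,
      insertSum k c n M j.castSucc = insertSum k c n M j.succ + D := by
    cases M with
    | zero => exact ⟨0, fun j => j.elim0⟩
    | succ M => exact ⟨_, insertSum_castSucc c n M⟩
  rw [← insertSum_zero, ← insertSum_last, ← Fin.two_nsmul_sum_eq_of_castSucc_eq_succ_add hD,
    sum_insertSum, smul_smul]

theorem gen_mul_wordSum_sub_wordSum_mul_gen (c : Bool) (n M : ℕ) :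
    gen k c * wordSum k n (M + 1) - wordSum k n (M + 1) * gen k c =
      (M + 1) • ((c.toNat : ℤ) - (!c).toNat) •
        ∑ v : Fin M → Bool, if (!c).toNat + trueCount v = n then weylWord k v else 0 := by
  have h := Fin.eq_add_nsmul_of_castSucc_eq_succ_add (insertSum_castSucc (k := k) c n M)
    (Fin.last _)
  rw [insertSum_zero, insertSum_last, Fin.val_last] at h
  rw [h, add_sub_cancel_left]

theorem wordSum_eq_zero {n M : ℕ} (h : M < n) : wordSum k n M = 0 :=
  Finset.sum_eq_zero fun w _ => if_neg ((trueCount_le w).trans_lt h).ne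

noncomputable def symSpan (k : Type*) [CommRing k] : Submodule k (Weyl k) :=
  Submodule.span k (Set.range fun nm : ℕ × ℕ => symMonomial k nm.1 nm.2)

theorem wordSum_mem_symSpan (n M : ℕ) : wordSum k n M ∈ symSpan k := by
  by_cases h : n ≤ M
  · obtain ⟨m, rfl⟩ := Nat.exists_eq_add_of_le h
    exact Submodule.subset_span ⟨(n, m), rfl⟩
  · rw [wordSum_eq_zero (not_le.mp h)]
    exact Submodule.zero_mem _

theorem sum_ite_add_trueCount_mem_symSpan (a n M : ℕ) :
    (∑ v : Fin M → Bool, if a + trueCount v = n then weylWord k v else 0) ∈ symSpan k := by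
  by_cases h : a ≤ n
  · convert wordSum_mem_symSpan (k := k) (n - a) M using 1
    exact Finset.sum_congr rfl fun v _ => if_congr (by omega) rfl rfl
  · rw [Finset.sum_eq_zero fun v _ => if_neg (by omega)]
    exact Submodule.zero_mem _

end CommRing

section Field

variable {k : Type*} [Field k] [CharZero k]

theorem gen_mul_wordSum_mem_symSpan (c : Bool) (n M : ℕ) :
    gen k c * wordSum k n M ∈ symSpan k := by
  set x := gen k c
  set S := wordSum k n M
  have hanti : x * S + S * x ∈ symSpan k := by
    rw [← Submodule.smul_mem_iff _ (Nat.cast_add_one_ne_zero M : (M + 1 : k) ≠ 0),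
      ← Nat.cast_add_one, Nat.cast_smul_eq_nsmul, gen_mul_wordSum_add_wordSum_mul_gen]
    exact Submodule.smul_of_tower_mem _ _ (wordSum_mem_symSpan _ _)
  have hcomm : x * S - S * x ∈ symSpan k := by
    cases M with
    | zero =>
      rw [← insertSum_zero, ← insertSum_last, Fin.last_zero, sub_self]
      exact Submodule.zero_mem _
    | succ M =>
      rw [gen_mul_wordSum_sub_wordSum_mul_gen]
      exact Submodule.smul_of_tower_mem _ _ (Submodule.smul_of_tower_mem _ _
        (sum_ite_add_trueCount_mem_symSpan _ _ _))
  have hsum : (2 : k) • (x * S) = (x * S + S * x) + (x * S - S * x) := by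
    rw [two_smul]; abel
  rw [← Submodule.smul_mem_iff _ (two_ne_zero : (2 : k) ≠ 0), hsum]
  exact Submodule.add_mem _ hanti hcomm

theorem mul_mem_symSpan (x : Weyl k) {y : Weyl k} (hy : y ∈ symSpan k) : x * y ∈ symSpan k := by
  induction x using Weyl.induction_on generalizing y with
  | algebraMap r =>
    rw [← Algebra.smul_def]
    exact Submodule.smul_mem _ _ hy
  | gen c =>
    induction hy using Submodule.span_induction with
    | mem y hy =>
      obtain ⟨⟨n, m⟩, rfl⟩ := hy
      exact gen_mul_wordSum_mem_symSpan c n (n + m)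
    | zero => simp
    | add y z _ _ hy hz => rw [mul_add]; exact Submodule.add_mem _ hy hz
    | smul r y _ hy => rw [mul_smul_comm]; exact Submodule.smul_mem _ _ hy
  | add x z hx hz => rw [add_mul]; exact Submodule.add_mem _ (hx hy) (hz hy)
  | mul x z hx hz => rw [mul_assoc]; exact hx (hz hy)

theorem symSpan_eq_top : symSpan k = ⊤ := by
  have hone : (1 : Weyl k) ∈ symSpan k := by
    convert wordSum_mem_symSpan (k := k) 0 0
    simp [wordSum, trueCount, weylWord]
  exact Submodule.eq_top_iff'.mpr fun x => mul_one x ▸ mul_mem_symSpan x hone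

theorem map_gen_mul_add_mul_gen_eq_zero (Str : Weyl k →ₗ[k] k)
    (hSym : ∀ n m : ℕ, 0 < n + m → Str (symMonomial k n m) = 0) (c : Bool) (b : Weyl k) :
    Str (gen k c * b + b * gen k c) = 0 := by
  have hwordSum : ∀ n M, 0 < M → Str (wordSum k n M) = 0 := by
    intro n M hM
    by_cases h : n ≤ M
    · obtain ⟨m, rfl⟩ := Nat.exists_eq_add_of_le h
      exact hSym n m hM
    · rw [wordSum_eq_zero (not_le.mp h), map_zero]
  let anticomm : Weyl k →ₗ[k] k :=
    Str ∘ₗ (LinearMap.mulLeft k (gen k c) + LinearMap.mulRight k (gen k c))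
  suffices symSpan k ≤ LinearMap.ker anticomm from
    this (symSpan_eq_top (k := k) ▸ Submodule.mem_top)
  refine Submodule.span_le.mpr ?_
  rintro _ ⟨⟨n, m⟩, rfl⟩
  have h := congrArg Str (gen_mul_wordSum_add_wordSum_mul_gen (k := k) c n (n + m))
  rw [map_nsmul, map_nsmul, hwordSum _ _ (Nat.succ_pos _), smul_zero, nsmul_eq_mul,
    mul_eq_zero] at h
  exact h.resolve_left (Nat.cast_ne_zero.mpr (Nat.succ_ne_zero _))

end Field

end Weyl

theorem supertrace_twisted_commutator_general (k : Type*) [Field k] [CharZero k]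
    (Str : Weyl k →ₗ[k] k)
    (hSym : ∀ n m : ℕ, 0 < n + m → Str (symMonomial k n m) = 0)
    (κ : Weyl k →ₐ[k] Weyl k)
    (hκq : κ (Wq k) = - Wq k) (hκp : κ (Wp k) = - Wp k) :
    ∀ a b : Weyl k, Str (a * b - b * κ a) = 0 := by
  intro a
  induction a using Weyl.induction_on with
  | algebraMap r => intro b; rw [AlgHom.commutes, Algebra.commutes, sub_self, map_zero]
  | gen c =>
    intro b
    have hκ : b * κ (Weyl.gen k c) = -(b * Weyl.gen k c) := by
      cases c
      exacts [(congrArg (b * ·) hκp).trans (mul_neg b (Wp k)),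
        (congrArg (b * ·) hκq).trans (mul_neg b (Wq k))]
    rw [hκ, sub_neg_eq_add]
    exact Weyl.map_gen_mul_add_mul_gen_eq_zero Str hSym c b
  | add x y hx hy =>
    intro b
    rw [map_add, add_mul, mul_add, add_sub_add_comm, map_add, hx, hy, add_zero]
  | mul x y hx hy =>
    intro b
    have split : x * y * b - b * κ (x * y) =
        (x * (y * b) - y * b * κ x) + (y * (b * κ x) - b * κ x * κ y) := by
      rw [map_mul]; noncomm_ring
    rw [split, map_add, hx, hy, add_zero]

theorem supertrace_twisted_commutator (k : Type*) [Field k] [CharZero k]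
    (Str : Weyl k →ₗ[k] k)
    (hOne : Str 1 = 1)
    (hSym : ∀ n m : ℕ, 0 < n + m → Str (symMonomial k n m) = 0)
    (κ : Weyl k →ₐ[k] Weyl k)
    (hκq : κ (Wq k) = - Wq k) (hκp : κ (Wp k) = - Wp k) :
    ∀ a b : Weyl k, Str (a * b - b * κ a) = 0 :=
  supertrace_twisted_commutator_general k Str hSym κ hκq hκp
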